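/- Let N ≥ 1, p ∈ [0,1], and for k = 0,…,N let Qₖ be n×n real symmetric positive semidefinite matrices; for k = 0,…,N−1 let Rₖ be s×s real symmetric positive definite matrices, Aₖ n×n real matrices, Bₖ n×s real matrices, and Wₖ n×n real symmetric positive semidefinite matrices. Define recursively K_N = Q_N, Vₖ = (Rₖ + BₖᵀK_{k+1}Bₖ)⁻¹BₖᵀK_{k+1}Aₖ, Λₖ = AₖᵀK_{k+1}BₖVₖ, Lₖ = Qₖ + AₖᵀK_{k+1}Aₖ, Kₖ = Lₖ − pΛₖ. For θ ∈ {0,1} define J_N(x,θ) = xᵀQ_Nx and, for k < N, Jₖ(x,θ) = xᵀ(Lₖ − θΛₖ)x + Σ_{j=k}^{N−1} tr(K_{j+1}Wⱼ). Let wₖ be zero-mean random vectors with covariance Wₖ. Then for every k < N and x ∈ ℝⁿ: (i) Jₖ(x,1) = xᵀQₖx + inf over u ∈ ℝˢ of [ uᵀRₖu + p·E[J_{k+1}(Aₖx + Bₖu + wₖ, 1)] + (1−p)·E[J_{k+1}(Aₖx + Bₖu + wₖ, 0)] ], with the infimum attained at u = −Vₖx; and (ii) Jₖ(x,0) = xᵀQₖx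 + p·E[J_{k+1}(Aₖx + wₖ, 1)] + (1−p)·E[J_{k+1}(Aₖx + wₖ, 0)]. -/

import Mathlib

open Matrix MeasureTheory

/-!
Downward induction shows that every `K j` is positive semidefinite:
`K j = Q j + (Aᵀ K A - Λ) + (1 - p) Λ`, where `Λ = Cᵀ (R + Bᵀ K B)⁻¹ C` with `C = Bᵀ K A`, and
`xᵀ (Aᵀ K A - Λ) x` is the minimum of the one-step cost `uᵀ R u + (A x + B u)ᵀ K (A x + B u)`.
Hence `R + Bᵀ K B` is positive definite.

Averaging `J (k+1)` over the next mode (ON with probability `p`) and over the noise gives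
`aᵀ K (k+1) a + ∑ tr (K W)`: the mode average of `L - θ Λ` is `K`, and
`E[(a + w)ᵀ M (a + w)] = aᵀ M a + tr (M W)`. Completing the square in `u` writes the cost as
`(u + V x)ᵀ (R + Bᵀ K B) (u + V x) + xᵀ (Aᵀ K A - Λ) x + const`, minimised at `u = -V x`.
-/

section Quadratic

variable {l m o α : Type*} [Fintype l] [Fintype m] [Fintype o] [CommRing α]

theorem dotProduct_mulVec_comm_of_isSymm {M : Matrix m m α} (hM : M.IsSymm) (v w : m → α) :
    v ⬝ᵥ (M *ᵥ w) = w ⬝ᵥ (M *ᵥ v) := by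
  rw [← dotProduct_transpose_mulVec, hM.eq]

theorem add_dotProduct_mulVec_add {M : Matrix m m α} (hM : M.IsSymm) (a b : m → α) :
    (a + b) ⬝ᵥ (M *ᵥ (a + b)) = a ⬝ᵥ (M *ᵥ a) + 2 * (a ⬝ᵥ (M *ᵥ b)) + b ⬝ᵥ (M *ᵥ b) := by
  rw [mulVec_add, dotProduct_add, add_dotProduct, add_dotProduct,
    dotProduct_mulVec_comm_of_isSymm hM b a]
  ring

theorem dotProduct_transpose_mul_mul_mulVec (A : Matrix m o α) (M : Matrix m m α) (x : o → α) :
    x ⬝ᵥ ((Aᵀ * M * A) *ᵥ x) = (A *ᵥ x) ⬝ᵥ (M *ᵥ (A *ᵥ x)) := by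
  rw [← mulVec_mulVec, ← mulVec_mulVec, dotProduct_transpose_mulVec, dotProduct_comm]

theorem dotProduct_mulVec_add_eq_completeSquare {R : Matrix l l α} {M : Matrix m m α}
    {A : Matrix m o α} {B : Matrix m l α} {V : Matrix l o α} (hR : R.IsSymm) (hM : M.IsSymm)
    (hPV : (R + Bᵀ * M * B) * V = Bᵀ * M * A) (x : o → α) (u : l → α) :
    u ⬝ᵥ (R *ᵥ u) + (A *ᵥ x + B *ᵥ u) ⬝ᵥ (M *ᵥ (A *ᵥ x + B *ᵥ u))
      = (u + V *ᵥ x) ⬝ᵥ ((R + Bᵀ * M * B) *ᵥ (u + V *ᵥ x))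
        + x ⬝ᵥ ((Aᵀ * M * A - Aᵀ * M * B * V) *ᵥ x) := by
  set P := R + Bᵀ * M * B
  set y := V *ᵥ x
  have hP : P.IsSymm := by
    simp only [P, IsSymm, transpose_add, transpose_mul, transpose_transpose, hR.eq, hM.eq,
      Matrix.mul_assoc]
  have hPy : P *ᵥ y = Bᵀ *ᵥ (M *ᵥ (A *ᵥ x)) := by
    rw [mulVec_mulVec, hPV, ← mulVec_mulVec, ← mulVec_mulVec]
  have hPu : u ⬝ᵥ (P *ᵥ u) = u ⬝ᵥ (R *ᵥ u) + (B *ᵥ u) ⬝ᵥ (M *ᵥ (B *ᵥ u)) := by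
    rw [add_mulVec, dotProduct_add, dotProduct_transpose_mul_mul_mulVec]
  have hcross : u ⬝ᵥ (P *ᵥ y) = (A *ᵥ x) ⬝ᵥ (M *ᵥ (B *ᵥ u)) := by
    rw [hPy, dotProduct_transpose_mulVec, dotProduct_mulVec_comm_of_isSymm hM, dotProduct_comm]
  have hΛ : x ⬝ᵥ ((Aᵀ * M * B * V) *ᵥ x) = y ⬝ᵥ (P *ᵥ y) := by
    rw [hPy, ← mulVec_mulVec, ← mulVec_mulVec, ← mulVec_mulVec, dotProduct_transpose_mulVec,
      dotProduct_comm, dotProduct_mulVec_comm_of_isSymm hM, dotProduct_transpose_mulVec B,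
      dotProduct_comm]
  rw [add_dotProduct_mulVec_add hP, add_dotProduct_mulVec_add hM, sub_mulVec, dotProduct_sub,
    hPu, hcross, hΛ, dotProduct_transpose_mul_mul_mulVec]
  ring

end Quadratic

section Riccati

variable {l m o : Type*} [Fintype l] [Fintype m] [Fintype o]
  {R : Matrix l l ℝ} {M : Matrix m m ℝ} {A : Matrix m o ℝ} {B : Matrix m l ℝ}

theorem Matrix.PosSemidef.dotProduct_mulVec_self_nonneg {M : Matrix m m ℝ} (hM : M.PosSemidef)
    (v : m → ℝ) : 0 ≤ v ⬝ᵥ (M *ᵥ v) := by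
  simpa using hM.dotProduct_mulVec_nonneg v

theorem iInf_dotProduct_mulVec_add_add {P : Matrix l l ℝ} (hP : P.PosSemidef) (y : l → ℝ)
    (c : ℝ) : ⨅ u, (u + y) ⬝ᵥ (P *ᵥ (u + y)) + c = c := by
  have hle : ∀ u, c ≤ (u + y) ⬝ᵥ (P *ᵥ (u + y)) + c := fun u =>
    le_add_of_nonneg_left (hP.dotProduct_mulVec_self_nonneg _)
  exact le_antisymm (ciInf_le_of_le ⟨c, Set.forall_mem_range.2 hle⟩ (-y) (by simp))
    (le_ciInf hle)

theorem posDef_add_transpose_mul_mul (hR : R.PosDef) (hM : M.PosSemidef) (B : Matrix m l ℝ) :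
    (R + Bᵀ * M * B).PosDef :=
  hR.add_posSemidef (by simpa using hM.conjTranspose_mul_mul_same B)

theorem posSemidef_riccati [DecidableEq l] {Q : Matrix o o ℝ} {p : ℝ} (hp : p ≤ 1)
    (hQ : Q.PosSemidef) (hR : R.PosDef) (hM : M.PosSemidef) :
    (Q + Aᵀ * M * A - p • (Aᵀ * M * B * ((R + Bᵀ * M * B)⁻¹ * (Bᵀ * M * A)))).PosSemidef := by
  set P := R + Bᵀ * M * B
  set Λ := Aᵀ * M * B * (P⁻¹ * (Bᵀ * M * A))
  have hP : P.PosDef := posDef_add_transpose_mul_mul hR hM B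
  have hMs : M.IsSymm := isHermitian_iff_isSymm.1 hM.isHermitian
  have hΛ : Λ.PosSemidef := by
    have hΛ_eq : Λ = (Bᵀ * M * A)ᴴ * P⁻¹ * (Bᵀ * M * A) := by
      simp only [Λ, conjTranspose_eq_transpose_of_trivial, transpose_mul, transpose_transpose,
        hMs.eq, Matrix.mul_assoc]
    rw [hΛ_eq]
    exact hP.inv.posSemidef.conjTranspose_mul_mul_same _
  have hgap : (Aᵀ * M * A - Λ).PosSemidef := by
    have hsymm : (Aᵀ * M * A - Λ).IsHermitian := by
      simpa using (hM.conjTranspose_mul_mul_same A).isHermitian.sub hΛ.isHermitian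
    refine .of_dotProduct_mulVec_nonneg hsymm fun x => ?_
    have hPV : P * (P⁻¹ * (Bᵀ * M * A)) = Bᵀ * M * A :=
      mul_nonsing_inv_cancel_left _ _ hP.det_pos.ne'.isUnit
    have hmin := dotProduct_mulVec_add_eq_completeSquare
      (isHermitian_iff_isSymm.1 hR.isHermitian) hMs hPV x
      (-((P⁻¹ * (Bᵀ * M * A)) *ᵥ x))
    rw [neg_add_cancel, zero_dotProduct, zero_add] at hmin
    rw [star_trivial, ← show _ = x ⬝ᵥ ((Aᵀ * M * A - Λ) *ᵥ x) from hmin]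
    exact add_nonneg (hR.posSemidef.dotProduct_mulVec_self_nonneg _)
      (hM.dotProduct_mulVec_self_nonneg _)
  have hsplit : Q + Aᵀ * M * A - p • Λ = Q + ((Aᵀ * M * A - Λ) + (1 - p) • Λ) := by module
  rw [hsplit]
  exact hQ.add (hgap.add (hΛ.smul (by linarith)))

end Riccati

section Expectation

variable {Ω ι : Type*} [MeasurableSpace Ω] {μ : Measure Ω} [IsProbabilityMeasure μ] [Fintype ι]

theorem integral_add_mul_add {f g : Ω → ℝ} (hf : MemLp f 2 μ) (hg : MemLp g 2 μ)
    (hf0 : ∫ ω, f ω ∂μ = 0) (hg0 : ∫ ω, g ω ∂μ = 0) (a b : ℝ) :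
    ∫ ω, (a + f ω) * (b + g ω) ∂μ = a * b + ∫ ω, f ω * g ω ∂μ := by
  have hf1 : Integrable f μ := hf.integrable one_le_two
  have hg1 : Integrable g μ := hg.integrable one_le_two
  have hfg : Integrable (fun ω => f ω * g ω) μ := hf.integrable_mul hg
  have h₁ : Integrable (fun ω => b * f ω + f ω * g ω) μ := (hf1.const_mul b).add hfg
  have h₂ : Integrable (fun ω => a * g ω + (b * f ω + f ω * g ω)) μ := (hg1.const_mul a).add h₁
  calc ∫ ω, (a + f ω) * (b + g ω) ∂μ
      = ∫ ω, (a * b + (a * g ω + (b * f ω + f ω * g ω))) ∂μ :=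
        integral_congr_ae (.of_forall fun ω => by ring)
    _ = a * b + ∫ ω, f ω * g ω ∂μ := by
        rw [integral_add (integrable_const _) h₂, integral_add (hg1.const_mul a) h₁,
          integral_add (hf1.const_mul b) hfg]
        simp [integral_const_mul, hf0, hg0]

theorem dotProduct_mulVec_self_eq_sum (M : Matrix ι ι ℝ) (v : ι → ℝ) :
    v ⬝ᵥ (M *ᵥ v) = ∑ i, ∑ j, M i j * (v j * v i) := by
  simp only [dotProduct, mulVec, Finset.mul_sum]
  exact Finset.sum_congr rfl fun i _ => Finset.sum_congr rfl fun j _ => by ring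

variable {w : Ω → ι → ℝ} {C : Matrix ι ι ℝ}

theorem integrable_add_dotProduct_mulVec_add (hL2 : ∀ i, MemLp (fun ω => w ω i) 2 μ)
    (M : Matrix ι ι ℝ) (a : ι → ℝ) :
    Integrable (fun ω => (a + w ω) ⬝ᵥ (M *ᵥ (a + w ω))) μ := by
  simp_rw [dotProduct_mulVec_self_eq_sum]
  refine integrable_finsetSum _ fun i _ => integrable_finsetSum _ fun j _ => ?_
  exact (((memLp_const (a j)).add (hL2 j)).integrable_mul
    ((memLp_const (a i)).add (hL2 i))).const_mul _

theorem integral_add_dotProduct_mulVec_add (hL2 : ∀ i, MemLp (fun ω => w ω i) 2 μ)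
    (hmean : ∀ i, ∫ ω, w ω i ∂μ = 0) (hcov : ∀ i j, ∫ ω, w ω i * w ω j ∂μ = C i j)
    (M : Matrix ι ι ℝ) (a : ι → ℝ) :
    ∫ ω, (a + w ω) ⬝ᵥ (M *ᵥ (a + w ω)) ∂μ = a ⬝ᵥ (M *ᵥ a) + (M * C).trace := by
  have hint : ∀ i j, Integrable (fun ω => (a j + w ω j) * (a i + w ω i)) μ := fun i j =>
    ((memLp_const (a j)).add (hL2 j)).integrable_mul ((memLp_const (a i)).add (hL2 i))
  calc ∫ ω, (a + w ω) ⬝ᵥ (M *ᵥ (a + w ω)) ∂μ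
      = ∫ ω, ∑ i, ∑ j, M i j * ((a j + w ω j) * (a i + w ω i)) ∂μ := by
        simp_rw [dotProduct_mulVec_self_eq_sum, Pi.add_apply]
    _ = ∑ i, ∑ j, M i j * (a j * a i + C j i) := by
        refine (integral_finsetSum _ fun i _ =>
          integrable_finsetSum _ fun j _ => (hint i j).const_mul _).trans ?_
        refine Finset.sum_congr rfl fun i _ => ?_
        rw [integral_finsetSum _ fun j _ => (hint i j).const_mul _]
        refine Finset.sum_congr rfl fun j _ => ?_
        rw [integral_const_mul, integral_add_mul_add (hL2 j) (hL2 i) (hmean j) (hmean i), hcov]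
    _ = a ⬝ᵥ (M *ᵥ a) + (M * C).trace := by
        simp only [mul_add, Finset.sum_add_distrib, dotProduct_mulVec_self_eq_sum, trace, diag,
          mul_apply]

theorem integral_mix_quadratic (hL2 : ∀ i, MemLp (fun ω => w ω i) 2 μ)
    (hmean : ∀ i, ∫ ω, w ω i ∂μ = 0) (hcov : ∀ i j, ∫ ω, w ω i * w ω j ∂μ = C i j)
    {p c : ℝ} {M : Bool → Matrix ι ι ℝ} {K : Matrix ι ι ℝ}
    (hK : p • M true + (1 - p) • M false = K) {f : (ι → ℝ) → Bool → ℝ}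
    (hf : ∀ x θ, f x θ = x ⬝ᵥ (M θ *ᵥ x) + c) (a : ι → ℝ) :
    p * ∫ ω, f (a + w ω) true ∂μ + (1 - p) * ∫ ω, f (a + w ω) false ∂μ
      = a ⬝ᵥ (K *ᵥ a) + ((K * C).trace + c) := by
  have hθ : ∀ θ, ∫ ω, f (a + w ω) θ ∂μ = a ⬝ᵥ (M θ *ᵥ a) + (M θ * C).trace + c := by
    intro θ
    simp_rw [hf]
    rw [integral_add (integrable_add_dotProduct_mulVec_add hL2 _ a) (integrable_const c),
      integral_add_dotProduct_mulVec_add hL2 hmean hcov, integral_const]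
    simp
  rw [hθ, hθ, ← hK]
  simp only [add_mulVec, smul_mulVec, dotProduct_add, dotProduct_smul, smul_eq_mul, add_mul,
    smul_mul, trace_add, trace_smul]
  ring

end Expectation

theorem bellman_verification_full_info_general {n s : ℕ}
    {Ω : Type*} [MeasurableSpace Ω] (μ : Measure Ω) [IsProbabilityMeasure μ]
    (N : ℕ) (p : ℝ) (hp : p ∈ Set.Icc (0 : ℝ) 1)
    (Q : ℕ → Matrix (Fin n) (Fin n) ℝ)
    (R : ℕ → Matrix (Fin s) (Fin s) ℝ)
    (A : ℕ → Matrix (Fin n) (Fin n) ℝ)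
    (B : ℕ → Matrix (Fin n) (Fin s) ℝ)
    (W : ℕ → Matrix (Fin n) (Fin n) ℝ)
    (hQ : ∀ k ≤ N, (Q k).PosSemidef)
    (hR : ∀ k < N, (R k).PosDef)
    (w : ℕ → Ω → Fin n → ℝ)
    (hL2 : ∀ k < N, ∀ i, MemLp (fun ω => w k ω i) 2 μ)
    (hmean : ∀ k < N, ∀ i, ∫ ω, w k ω i ∂μ = 0)
    (hcov : ∀ k < N, ∀ i j, ∫ ω, w k ω i * w k ω j ∂μ = W k i j)
    (K L Λ : ℕ → Matrix (Fin n) (Fin n) ℝ)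
    (V : ℕ → Matrix (Fin s) (Fin n) ℝ)
    (hKN : K N = Q N)
    (hV : ∀ k < N, V k = (R k + (B k)ᵀ * K (k + 1) * B k)⁻¹ * ((B k)ᵀ * K (k + 1) * A k))
    (hΛ : ∀ k < N, Λ k = (A k)ᵀ * K (k + 1) * B k * V k)
    (hL : ∀ k < N, L k = Q k + (A k)ᵀ * K (k + 1) * A k)
    (hK : ∀ k < N, K k = L k - p • Λ k)
    (J : ℕ → (Fin n → ℝ) → Bool → ℝ)
    (hJN : ∀ (x : Fin n → ℝ) (θ : Bool), J N x θ = x ⬝ᵥ (Q N *ᵥ x))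
    (hJ : ∀ k < N, ∀ (x : Fin n → ℝ) (θ : Bool),
      J k x θ = x ⬝ᵥ ((L k - (if θ then (1 : ℝ) else 0) • Λ k) *ᵥ x)
        + ∑ j ∈ Finset.Ico k N, (K (j + 1) * W j).trace) :
    ∀ k < N, ∀ x : Fin n → ℝ,
      letI g : (Fin s → ℝ) → ℝ := fun u =>
        u ⬝ᵥ (R k *ᵥ u)
          + p * ∫ ω, J (k + 1) (A k *ᵥ x + B k *ᵥ u + w k ω) true ∂μ
          + (1 - p) * ∫ ω, J (k + 1) (A k *ᵥ x + B k *ᵥ u + w k ω) false ∂μ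
      (J k x true = x ⬝ᵥ (Q k *ᵥ x) + ⨅ u : Fin s → ℝ, g u)
        ∧ (⨅ u : Fin s → ℝ, g u) = g (-(V k *ᵥ x))
        ∧ J k x false = x ⬝ᵥ (Q k *ᵥ x)
            + p * ∫ ω, J (k + 1) (A k *ᵥ x + w k ω) true ∂μ
            + (1 - p) * ∫ ω, J (k + 1) (A k *ᵥ x + w k ω) false ∂μ := by
  intro k hk x
  have hK_psd : ∀ j ≤ N, (K j).PosSemidef := by
    refine fun j => Nat.decreasingInduction (fun j hj ih => ?_) (hKN ▸ hQ N le_rfl)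
    rw [hK j hj, hL j hj, hΛ j hj, hV j hj]
    exact posSemidef_riccati hp.2 (hQ j hj.le) (hR j hj) ih
  have hM := hK_psd (k + 1) hk
  have hP := posDef_add_transpose_mul_mul (hR k hk) hM (B k)
  have hPV : (R k + (B k)ᵀ * K (k + 1) * B k) * V k = (B k)ᵀ * K (k + 1) * A k := by
    rw [hV k hk]
    exact mul_nonsing_inv_cancel_left _ _ hP.det_pos.ne'.isUnit
  have hcost : ∀ a, p * ∫ ω, J (k + 1) (a + w k ω) true ∂μ
      + (1 - p) * ∫ ω, J (k + 1) (a + w k ω) false ∂μ = a ⬝ᵥ (K (k + 1) *ᵥ a)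
        + ∑ j ∈ Finset.Ico k N, (K (j + 1) * W j).trace := by
    intro a
    rw [Finset.sum_eq_sum_Ico_succ_bot hk]
    rcases (Nat.succ_le_of_lt hk).eq_or_lt with hN | hN
    · subst hN
      rw [Finset.Ico_self, Finset.sum_empty]
      refine integral_mix_quadratic (hL2 k hk) (hmean k hk) (hcov k hk) (M := fun _ => Q (k + 1))
        ?_ (fun x θ => by rw [hJN, add_zero]) a
      rw [hKN, ← add_smul]
      simp
    · refine integral_mix_quadratic (hL2 k hk) (hmean k hk) (hcov k hk)
        (M := fun θ => L (k + 1) - (if θ then 1 else 0) • Λ (k + 1)) ?_ (hJ (k + 1) hN) a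
      rw [hK (k + 1) hN]
      simp only [if_true, Bool.false_eq_true, if_false]
      module
  have hg : ∀ u, u ⬝ᵥ (R k *ᵥ u)
      + p * ∫ ω, J (k + 1) (A k *ᵥ x + B k *ᵥ u + w k ω) true ∂μ
      + (1 - p) * ∫ ω, J (k + 1) (A k *ᵥ x + B k *ᵥ u + w k ω) false ∂μ
      = (u + V k *ᵥ x) ⬝ᵥ ((R k + (B k)ᵀ * K (k + 1) * B k) *ᵥ (u + V k *ᵥ x))
        + (x ⬝ᵥ (((A k)ᵀ * K (k + 1) * A k - Λ k) *ᵥ x)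
          + ∑ j ∈ Finset.Ico k N, (K (j + 1) * W j).trace) := by
    intro u
    rw [add_assoc, hcost, ← add_assoc, dotProduct_mulVec_add_eq_completeSquare
      (isHermitian_iff_isSymm.1 (hR k hk).isHermitian) (isHermitian_iff_isSymm.1 hM.isHermitian)
      hPV, hΛ k hk, add_assoc]
  simp only [hg, iInf_dotProduct_mulVec_add_add hP.posSemidef]
  refine ⟨?_, by simp, ?_⟩
  · rw [hJ k hk, hL k hk]
    simp only [if_true, one_smul, add_sub_assoc, add_mulVec, dotProduct_add]
    ring
  · rw [hJ k hk, add_assoc, hcost, hL k hk]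
    simp only [Bool.false_eq_true, if_false, zero_smul, sub_zero, add_mulVec, dotProduct_add,
      dotProduct_transpose_mul_mul_mulVec]
    ring

/-- Verification form of Theorem 1 (fully observed states, perfectly matched fog
controller, symmetric Markov reliability `p = 1 − q`): the quadratic functions
`Jₖ(x,θ) = xᵀ(Lₖ − Λₖ·1{θ=1})x + Σ_{j=k}^{N−1} tr(K_{j+1}Wⱼ)` (with `J_N(x,θ) = xᵀQ_Nx`)
satisfy the finite-horizon Bellman equations: when the controller is ON (`θ = 1`) the
infimum over controls is attained at the linear feedback `u = −Vₖx`, and when it is OFF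
(`θ = 0`) zero control is applied. -/
theorem bellman_verification_full_info {n s : ℕ}
    {Ω : Type*} [MeasurableSpace Ω] (μ : Measure Ω) [IsProbabilityMeasure μ]
    (N : ℕ) (hN : 1 ≤ N) (p : ℝ) (hp : p ∈ Set.Icc (0 : ℝ) 1)
    (Q : ℕ → Matrix (Fin n) (Fin n) ℝ)
    (R : ℕ → Matrix (Fin s) (Fin s) ℝ)
    (A : ℕ → Matrix (Fin n) (Fin n) ℝ)
    (B : ℕ → Matrix (Fin n) (Fin s) ℝ)
    (W : ℕ → Matrix (Fin n) (Fin n) ℝ)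
    (hQ : ∀ k ≤ N, (Q k).PosSemidef)
    (hR : ∀ k < N, (R k).PosDef)
    (hW : ∀ k < N, (W k).PosSemidef)
    (w : ℕ → Ω → Fin n → ℝ)
    (hL2 : ∀ k < N, ∀ i, MemLp (fun ω => w k ω i) 2 μ)
    (hmean : ∀ k < N, ∀ i, ∫ ω, w k ω i ∂μ = 0)
    (hcov : ∀ k < N, ∀ i j, ∫ ω, w k ω i * w k ω j ∂μ = W k i j)
    (K L Λ : ℕ → Matrix (Fin n) (Fin n) ℝ)
    (V : ℕ → Matrix (Fin s) (Fin n) ℝ)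
    (hKN : K N = Q N)
    (hV : ∀ k < N, V k = (R k + (B k)ᵀ * K (k + 1) * B k)⁻¹ * ((B k)ᵀ * K (k + 1) * A k))
    (hΛ : ∀ k < N, Λ k = (A k)ᵀ * K (k + 1) * B k * V k)
    (hL : ∀ k < N, L k = Q k + (A k)ᵀ * K (k + 1) * A k)
    (hK : ∀ k < N, K k = L k - p • Λ k)
    (J : ℕ → (Fin n → ℝ) → Bool → ℝ)
    (hJN : ∀ (x : Fin n → ℝ) (θ : Bool), J N x θ = x ⬝ᵥ (Q N *ᵥ x))
    (hJ : ∀ k < N, ∀ (x : Fin n → ℝ) (θ : Bool),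
      J k x θ = x ⬝ᵥ ((L k - (if θ then (1 : ℝ) else 0) • Λ k) *ᵥ x)
        + ∑ j ∈ Finset.Ico k N, (K (j + 1) * W j).trace) :
    ∀ k < N, ∀ x : Fin n → ℝ,
      letI g : (Fin s → ℝ) → ℝ := fun u =>
        u ⬝ᵥ (R k *ᵥ u)
          + p * ∫ ω, J (k + 1) (A k *ᵥ x + B k *ᵥ u + w k ω) true ∂μ
          + (1 - p) * ∫ ω, J (k + 1) (A k *ᵥ x + B k *ᵥ u + w k ω) false ∂μ
      (J k x true = x ⬝ᵥ (Q k *ᵥ x) + ⨅ u : Fin s → ℝ, g u)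
        ∧ (⨅ u : Fin s → ℝ, g u) = g (-(V k *ᵥ x))
        ∧ J k x false = x ⬝ᵥ (Q k *ᵥ x)
            + p * ∫ ω, J (k + 1) (A k *ᵥ x + w k ω) true ∂μ
            + (1 - p) * ∫ ω, J (k + 1) (A k *ᵥ x + w k ω) false ∂μ :=
  bellman_verification_full_info_general μ N p hp Q R A B W hQ hR w hL2 hmean hcov K L Λ V hKN hV hΛ
    hL hK J hJN hJ
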